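/- Let u be a nonempty palindrome and let v be a nonempty prefix of u. For every k ≥ 2, the word (reverse of v) u^{k-1} v is a palindromic suffix of u^k v, and it is the longest palindromic suffix if it is unioccurrent; more generally, u^k v has a unioccurrent longest palindromic suffix, and consequently D(u^{k+1}) = D(u^k) for all k ≥ 2. -/

import Mathlib

open List

variable {A : Type*}

/-- All factors (contiguous subwords) of a word, as a list. -/
def Factors (w : List A) : List (List A) := w.tails.flatMap List.inits

/-- The set of distinct palindromic factors of `w` (including the empty word). -/
def palFactors [DecidableEq A] (w : List A) : Finset (List A) :=
  ((Factors w).filter (fun u => decide (u.reverse = u))).toFinset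

/-- A word is rich if it has exactly `|w| + 1` distinct palindromic factors. -/
def IsRich [DecidableEq A] (w : List A) : Prop :=
  (palFactors w).card = w.length + 1

/-- The defect of a finite word. -/
def defect [DecidableEq A] (w : List A) : ℕ :=
  w.length + 1 - (palFactors w).card

/-- `u` is a (finite) factor of the infinite word `z`. -/
def FactorOfInf (u : List A) (z : ℕ → A) : Prop :=
  ∃ i, u = (List.range u.length).map (fun k => z (i + k))

/-- An infinite word is rich if all of its finite factors are rich. -/
def InfRich [DecidableEq A] (z : ℕ → A) : Prop :=
  ∀ u : List A, FactorOfInf u z → IsRich u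

/-- The longest palindromic suffix of `w`. -/
def lps [DecidableEq A] (w : List A) : List A :=
  (w.tails.find? (fun u => decide (u.reverse = u))).getD []

/-- The number of occurrences of `u` as a factor of `w` (counted by position). -/
def occCount [DecidableEq A] (u w : List A) : ℕ :=
  w.tails.countP (fun t => decide (u <+: t))

/-- The periodic infinite word `u^∞`. -/
def periodicWord (u : List A) (hu : u ≠ []) : ℕ → A :=
  fun i => u.get ⟨i % u.length, Nat.mod_lt _ (List.length_pos_iff.mpr hu)⟩

/-!
For `n = |u|`, the word `u^k v` is the prefix of length `k n + |v|` of the periodic word `u^ω`,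
whose period block is a palindrome: positions `i`, `j` with `n ∣ i + j + 1` carry the same letter.
Every prefix `w` of length `L ≥ 2n` of such a word has a unioccurrent longest palindromic suffix,
by strong induction on `n`.

If the block occurs in `w` at a position `0 < p < n`, then `p` is a period as well, and the block
of length `p` is again a palindrome, so the claim follows for the smaller period. Otherwise `w` has
a palindromic suffix starting before position `n`, so `lps w` covers the occurrence of the block
at position `n`; any earlier occurrence of `lps w` would move that block to a position strictly
between `0` and `n`.

Appending a letter creates at most one new palindrome, the longest palindromic suffix, and creates
it exactly when that suffix is unioccurrent. Hence each of the `n` letters taking `u^k` to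
`u^(k+1)` adds one palindrome, and the defect does not change.
-/

open Function

lemma List.IsSuffix.isPrefix_of_reverse_eq {x y : List A} (h : x <:+ y) (hx : x.reverse = x)
    (hy : y.reverse = y) : x <+: y := by
  simpa [hx, hy] using h.reverse

lemma List.IsSuffix.prefix_drop {x w : List A} (h : x <:+ w) :
    x <+: w.drop (w.length - x.length) :=
  List.suffix_iff_eq_drop.mp h ▸ List.prefix_refl _

lemma List.tails_eq_map_range_drop (w : List A) :
    w.tails = (List.range (w.length + 1)).map (fun i => w.drop i) := by
  apply List.ext_getElem <;> simp [List.getElem_tails]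

lemma exists_lt_dvd_add (L : ℕ) {n : ℕ} (hn : 0 < n) : ∃ s < n, n ∣ s + L := by
  refine ⟨(n - L % n) % n, Nat.mod_lt _ hn, ?_⟩
  rw [Nat.dvd_iff_mod_eq_zero, Nat.mod_add_mod, ← Nat.add_mod_mod,
    Nat.sub_add_cancel (Nat.mod_lt L hn).le, Nat.mod_self]

lemma drop_map_range (z : ℕ → A) (s L : ℕ) :
    ((List.range L).map z).drop s = (List.range (L - s)).map (fun i => z (s + i)) := by
  apply List.ext_getElem <;> simp

lemma map_range_prefix_drop_map_range_iff {z : ℕ → A} {n p L : ℕ} (h : p + n ≤ L) :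
    (List.range n).map z <+: ((List.range L).map z).drop p ↔ ∀ i < n, z (p + i) = z i := by
  rw [drop_map_range, List.prefix_iff_eq_take, List.length_map, List.length_range,
    ← List.map_take, List.take_range, min_eq_left (by omega), eq_comm, List.map_inj_left]
  simp

section Palindromes

variable [DecidableEq A]

lemma find?_tails_eq_some_lps (w : List A) :
    w.tails.find? (fun u => decide (u.reverse = u)) = some (lps w) := by
  rcases h : w.tails.find? (fun u => decide (u.reverse = u)) with _ | q
  · simpa using List.find?_eq_none.mp h [] ((List.mem_tails _ _).mpr List.nil_suffix)
  · simp [lps, h]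

lemma lps_suffix (w : List A) : lps w <:+ w :=
  (List.mem_tails _ _).mp (List.mem_of_find?_eq_some (find?_tails_eq_some_lps w))

lemma reverse_lps (w : List A) : (lps w).reverse = lps w := by
  simpa using List.find?_some (find?_tails_eq_some_lps w)

lemma length_le_length_lps {w q : List A} (hq : q <:+ w) (hpal : q.reverse = q) :
    q.length ≤ (lps w).length := by
  induction w with
  | nil => simp [List.suffix_nil.mp hq]
  | cons a w ih =>
    by_cases hw : (a :: w).reverse = a :: w
    · have : lps (a :: w) = a :: w := by
        rw [lps, List.tails_cons, List.find?_cons_of_pos (by simpa using hw)]; rfl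
      rw [this]; exact hq.length_le
    · have : lps (a :: w) = lps w := by
        rw [lps, List.tails_cons, List.find?_cons_of_neg (by simpa using hw)]; rfl
      rcases List.suffix_cons_iff.mp hq with rfl | hq
      · exact absurd hpal hw
      · rw [this]; exact ih hq

lemma occCount_eq_card_filter (x w : List A) :
    occCount x w = ((Finset.range (w.length + 1)).filter (fun i => x <+: w.drop i)).card := by
  rw [occCount, List.tails_eq_map_range_drop, List.countP_map, List.countP_eq_length_filter,
    ← List.toFinset_card_of_nodup (List.nodup_range.filter _)]
  congr 1
  ext
  simp

lemma occCount_eq_one_of_unique {x w : List A} {j : ℕ} (hj : j ≤ w.length) (hx : x <+: w.drop j)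
    (huniq : ∀ i ≤ w.length, x <+: w.drop i → i = j) : occCount x w = 1 := by
  rw [occCount_eq_card_filter, Finset.card_eq_one]
  refine ⟨j, Finset.eq_singleton_iff_unique_mem.mpr ⟨?_, ?_⟩⟩
  · simpa [Nat.lt_succ_iff] using ⟨hj, hx⟩
  · intro i hi
    simp only [Finset.mem_filter, Finset.mem_range, Nat.lt_succ_iff] at hi
    exact huniq i hi.1 hi.2

lemma eq_of_occCount_eq_one {x w : List A} {i j : ℕ} (h : occCount x w = 1)
    (hi : i ≤ w.length) (hj : j ≤ w.length) (hxi : x <+: w.drop i) (hxj : x <+: w.drop j) :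
    i = j := by
  rw [occCount_eq_card_filter] at h
  exact Finset.card_le_one.mp h.le i (by simpa [Nat.lt_succ_iff] using ⟨hi, hxi⟩) j
    (by simpa [Nat.lt_succ_iff] using ⟨hj, hxj⟩)

lemma lps_eq_of_occCount_eq_one {w p : List A} (hp : p <:+ w) (hpal : p.reverse = p)
    (hocc : occCount p w = 1) : lps w = p := by
  have hle := length_le_length_lps hp hpal
  have hlps := lps_suffix w
  rcases hle.lt_or_eq with hlt | heq
  · have hpre : p <+: lps w :=
      (List.suffix_of_suffix_length_le hp hlps hlt.le).isPrefix_of_reverse_eq hpal (reverse_lps w)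
    have := eq_of_occCount_eq_one hocc (Nat.sub_le _ _) (Nat.sub_le _ _)
      (hpre.trans hlps.prefix_drop) hp.prefix_drop
    have := hlps.length_le
    omega
  · exact (List.suffix_of_suffix_length_le hlps hp heq.ge).eq_of_length heq.symm

lemma mem_palFactors {x w : List A} : x ∈ palFactors w ↔ x <:+: w ∧ x.reverse = x := by
  simp [palFactors, Factors, List.infix_iff_prefix_suffix, and_comm]

lemma infix_of_suffix_append_singleton_of_ne_lps {w x : List A} {a : A} (hx : x <:+ w ++ [a])
    (hpal : x.reverse = x) (hne : x ≠ lps (w ++ [a])) : x <:+: w := by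
  have hlps := lps_suffix (w ++ [a])
  have hlt : x.length < (lps (w ++ [a])).length :=
    (length_le_length_lps hx hpal).lt_of_ne fun h => hne ((List.suffix_of_suffix_length_le hlps hx
      h.ge).eq_of_length h.symm).symm
  have hpre : x <+: lps (w ++ [a]) :=
    (List.suffix_of_suffix_length_le hx hlps hlt.le).isPrefix_of_reverse_eq hpal (reverse_lps _)
  obtain hnil | ⟨t, ht, htw⟩ := List.suffix_concat_iff.mp hlps
  · simp [hnil] at hlt
  rw [ht] at hpre hlt
  obtain heq | hxt := List.prefix_concat_iff.mp hpre
  · simp [heq] at hlt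
  · exact hxt.isInfix.trans htw.isInfix

lemma palFactors_append_singleton (w : List A) (a : A) :
    palFactors (w ++ [a]) = insert (lps (w ++ [a])) (palFactors w) := by
  ext x
  simp only [Finset.mem_insert, mem_palFactors]
  constructor
  · rintro ⟨hx, hpal⟩
    by_cases hne : x = lps (w ++ [a])
    · exact .inl hne
    obtain hsuf | hinf := List.infix_concat_iff.mp hx
    · exact .inr ⟨infix_of_suffix_append_singleton_of_ne_lps hsuf hpal hne, hpal⟩
    · exact .inr ⟨hinf, hpal⟩
  · rintro (rfl | ⟨hx, hpal⟩)
    · exact ⟨(lps_suffix _).isInfix, reverse_lps _⟩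
    · exact ⟨hx.trans (List.infix_append_left), hpal⟩

lemma lps_notMem_palFactors {w : List A} {a : A} (h : occCount (lps (w ++ [a])) (w ++ [a]) = 1) :
    lps (w ++ [a]) ∉ palFactors w := by
  intro hmem
  obtain ⟨⟨s, t, hst⟩, -⟩ := mem_palFactors.mp hmem
  have hlps := lps_suffix (w ++ [a])
  generalize lps (w ++ [a]) = L at h hlps hst
  subst hst
  have hocc : L <+: (s ++ L ++ t ++ [a]).drop s.length := by simp
  have := eq_of_occCount_eq_one h (by simp) (Nat.sub_le _ _) hocc hlps.prefix_drop
  simp at this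
  omega

lemma defect_append_singleton {w : List A} {a : A}
    (h : occCount (lps (w ++ [a])) (w ++ [a]) = 1) : defect (w ++ [a]) = defect w := by
  have := Finset.card_insert_of_notMem (lps_notMem_palFactors h)
  rw [← palFactors_append_singleton] at this
  simp only [defect, List.length_append, List.length_singleton, this]
  omega

end Palindromes

/-- `z` is `n`-periodic and its first `n` letters form a palindrome. -/
def PalPeriodic (z : ℕ → A) (n : ℕ) : Prop :=
  ∀ i j, n ∣ i + j + 1 → z i = z j

namespace PalPeriodic

variable {z : ℕ → A} {n : ℕ}

lemma periodic (hz : PalPeriodic z n) : Periodic z n := by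
  intro x
  rcases n with _ | m
  · rfl
  exact (hz _ (m * (x + 1)) ⟨x + 2, by ring⟩).trans (hz _ _ ⟨x + 1, by ring⟩).symm

lemma of_periodic {p : ℕ} (hz : PalPeriodic z n) (hn : 0 < n) (hp : Periodic z p) :
    PalPeriodic z p := by
  rintro i j ⟨c, hc⟩
  obtain ⟨m, rfl⟩ : ∃ m, n = m + 1 := ⟨n - 1, by omega⟩
  rw [← hp.nat_mul (m * c) j]
  exact hz _ _ ⟨c * p, by push_cast; linarith⟩

lemma reverse_drop_map_range (hz : PalPeriodic z n) {s L : ℕ} (hsL : n ∣ s + L) :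
    (((List.range L).map z).drop s).reverse = ((List.range L).map z).drop s := by
  apply List.ext_getElem (by simp)
  intro i hi _
  simp only [List.length_reverse, List.length_drop, List.length_map, List.length_range] at hi
  simp only [List.getElem_reverse, List.getElem_drop, List.getElem_map, List.getElem_range,
    List.length_drop, List.length_map, List.length_range]
  exact hz _ _ (by convert hsL using 1; omega)

end PalPeriodic

lemma palPeriodic_periodicWord (u : List A) (hu : u ≠ []) (hupal : u.reverse = u) :
    PalPeriodic (periodicWord u hu) u.length := by
  intro i j hij
  have hn := List.length_pos_iff.mpr hu
  have hmod : i % u.length + j % u.length + 1 = u.length := by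
    have : u.length ∣ i % u.length + j % u.length + 1 := by
      rw [← Nat.dvd_add_right (dvd_mul_right u.length (i / u.length + j / u.length))]
      convert hij using 1
      linarith [Nat.mod_add_div i u.length, Nat.mod_add_div j u.length]
    obtain ⟨c, hc⟩ := this
    have := Nat.mod_lt i hn
    have := Nat.mod_lt j hn
    rcases c with _ | _ | c
    · omega
    · omega
    · nlinarith
  simp only [periodicWord, List.get_eq_getElem,
    show j % u.length = u.length - 1 - i % u.length by omega]
  rw [← List.getElem_reverse]
  all_goals simp [hupal, Nat.mod_lt i hn]

lemma periodic_periodicWord (u : List A) (hu : u ≠ []) :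
    Periodic (periodicWord u hu) u.length := by
  simp [Periodic, periodicWord]

lemma map_range_periodicWord_of_prefix {u v : List A} (hu : u ≠ []) (hvu : v <+: u) :
    (List.range v.length).map (periodicWord u hu) = v := by
  apply List.ext_getElem (by simp)
  intro i hi _
  simp only [List.length_map, List.length_range] at hi
  simp [periodicWord, hvu.getElem, Nat.mod_eq_of_lt (hi.trans_le hvu.length_le)]

lemma flatten_replicate_append_eq_map_range {u v : List A} (hu : u ≠ []) (hvu : v <+: u)
    (k : ℕ) :
    (List.replicate k u).flatten ++ v =
      (List.range (k * u.length + v.length)).map (periodicWord u hu) := by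
  induction k with
  | zero => simpa using (map_range_periodicWord_of_prefix hu hvu).symm
  | succ k ih =>
    rw [show (k + 1) * u.length + v.length = u.length + (k * u.length + v.length) by ring,
      List.range_add, List.map_append, List.map_map, map_range_periodicWord_of_prefix hu
      List.prefix_rfl, List.replicate_succ, List.flatten_cons, List.append_assoc, ih]
    congr 1
    exact List.map_congr_left fun x _ => by simp [add_comm u.length x, periodic_periodicWord u hu x]

lemma periodic_of_map_range_prefix_drop {z : ℕ → A} {n p L : ℕ} (hz : Periodic z n)
    (hn : 0 < n) (h : p + n ≤ L) (hocc : (List.range n).map z <+: ((List.range L).map z).drop p) :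
    Periodic z p := by
  have hagree := (map_range_prefix_drop_map_range_iff h).mp hocc
  intro x
  calc z (x + p) = z ((p + x % n) % n) := by rw [Nat.add_mod_mod, add_comm, hz.map_mod_nat]
    _ = z (p + x % n) := hz.map_mod_nat _
    _ = z (x % n) := hagree _ (Nat.mod_lt x hn)
    _ = z x := hz.map_mod_nat x

section Periodic

variable [DecidableEq A]

lemma occCount_lps_map_range_of_forall_not_prefix {z : ℕ → A} {n L : ℕ} (hz : PalPeriodic z n)
    (hn : 0 < n) (hL : 2 * n ≤ L)
    (hno : ∀ p, 0 < p → p < n → ¬(List.range n).map z <+: ((List.range L).map z).drop p) :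
    occCount (lps ((List.range L).map z)) ((List.range L).map z) = 1 := by
  set w := (List.range L).map z with hw
  have hwlen : w.length = L := by simp [hw]
  obtain ⟨s, hs, hsL⟩ := exists_lt_dvd_add L hn
  have hlong : L - s ≤ (lps w).length := by
    simpa [hwlen] using length_le_length_lps (List.drop_suffix s w) (hz.reverse_drop_map_range hsL)
  set j := L - (lps w).length with hj
  have hlps : lps w = w.drop j := by
    rw [hj, ← hwlen]; exact List.suffix_iff_eq_drop.mp (lps_suffix w)
  have hblock : (List.range n).map z <+: w.drop n :=
    (map_range_prefix_drop_map_range_iff (by omega)).mpr fun i _ => add_comm n i ▸ hz.periodic i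
  refine occCount_eq_one_of_unique (j := j) (by omega) (hlps ▸ List.prefix_refl _) ?_
  intro i hi hocc
  have : (lps w).length ≤ L - i := by simpa [hwlen] using hocc.length_le
  by_contra hne
  refine hno (i + (n - j)) (by omega) (by omega) ?_
  calc (List.range n).map z <+: w.drop n := hblock
    _ = (lps w).drop (n - j) := by rw [hlps, List.drop_drop]; congr 1; omega
    _ <+: (w.drop i).drop (n - j) := hocc.drop _
    _ = w.drop (i + (n - j)) := by rw [List.drop_drop]

theorem occCount_lps_map_range {z : ℕ → A} {n L : ℕ} (hz : PalPeriodic z n) (hn : 0 < n)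
    (hL : 2 * n ≤ L) : occCount (lps ((List.range L).map z)) ((List.range L).map z) = 1 := by
  induction n using Nat.strong_induction_on with
  | _ n ih =>
    by_cases hocc :
        ∃ p, 0 < p ∧ p < n ∧ (List.range n).map z <+: ((List.range L).map z).drop p
    · obtain ⟨p, hp, hpn, hocc⟩ := hocc
      have hzp := periodic_of_map_range_prefix_drop hz.periodic hn (by omega) hocc
      exact ih p hpn (hz.of_periodic hn hzp) hp (by omega)
    · exact occCount_lps_map_range_of_forall_not_prefix hz hn hL fun p hp hpn h =>
        hocc ⟨p, hp, hpn, h⟩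

lemma defect_map_range_add {z : ℕ → A} {n L : ℕ} (hz : PalPeriodic z n) (hn : 0 < n)
    (hL : 2 * n ≤ L) (j : ℕ) :
    defect ((List.range (L + j)).map z) = defect ((List.range L).map z) := by
  induction j with
  | zero => rfl
  | succ j ih =>
    have hsnoc : (List.range (L + (j + 1))).map z = (List.range (L + j)).map z ++ [z (L + j)] := by
      rw [← add_assoc, List.range_succ, List.map_append, List.map_singleton]
    rw [hsnoc, defect_append_singleton (hsnoc ▸ occCount_lps_map_range hz hn (by omega)), ih]

end Periodic

lemma reverse_flatten_replicate {u : List A} (hu : u.reverse = u) (k : ℕ) :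
    (List.replicate k u).flatten.reverse = (List.replicate k u).flatten := by
  simp [List.reverse_flatten, hu]

lemma reverse_append_flatten_replicate_append_suffix {u v : List A} (hupal : u.reverse = u)
    (hvu : v <+: u) {k : ℕ} (hk : 0 < k) :
    v.reverse ++ (List.replicate (k - 1) u).flatten ++ v <:+ (List.replicate k u).flatten ++ v := by
  obtain ⟨t, ht⟩ := hvu
  obtain ⟨j, rfl⟩ : ∃ j, k = j + 1 := ⟨k - 1, by omega⟩
  have hu : u = t.reverse ++ v.reverse := by rw [← hupal, ← ht, List.reverse_append]
  have hpow : (List.replicate (j + 1) u).flatten =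
      t.reverse ++ v.reverse ++ (List.replicate j u).flatten := by
    rw [List.replicate_succ, List.flatten_cons, ← hu]
  exact ⟨t.reverse, by simp [hpow]⟩

theorem power_suffix_palindrome_and_defect [DecidableEq A] (u v : List A)
    (hu : u ≠ []) (hupal : u.reverse = u) (hv : v ≠ []) (hvu : v <+: u)
    (k : ℕ) (hk : 2 ≤ k) :
    (v.reverse ++ (List.replicate (k - 1) u).flatten ++ v <:+
        (List.replicate k u).flatten ++ v) ∧
    ((v.reverse ++ (List.replicate (k - 1) u).flatten ++ v).reverse =
        v.reverse ++ (List.replicate (k - 1) u).flatten ++ v) ∧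
    (occCount (v.reverse ++ (List.replicate (k - 1) u).flatten ++ v)
        ((List.replicate k u).flatten ++ v) = 1 →
      lps ((List.replicate k u).flatten ++ v) =
        v.reverse ++ (List.replicate (k - 1) u).flatten ++ v) ∧
    (occCount (lps ((List.replicate k u).flatten ++ v))
        ((List.replicate k u).flatten ++ v) = 1) ∧
    defect (List.replicate (k + 1) u).flatten = defect (List.replicate k u).flatten := by
  have hn : 0 < u.length := List.length_pos_iff.mpr hu
  have hz := palPeriodic_periodicWord u hu hupal
  have hsuf := reverse_append_flatten_replicate_append_suffix hupal hvu (k := k) (by omega)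
  have hpal : (v.reverse ++ (List.replicate (k - 1) u).flatten ++ v).reverse =
      v.reverse ++ (List.replicate (k - 1) u).flatten ++ v := by
    simp [reverse_flatten_replicate hupal]
  have hpow (j : ℕ) : (List.replicate j u).flatten =
      (List.range (j * u.length)).map (periodicWord u hu) := by
    simpa using flatten_replicate_append_eq_map_range hu List.nil_prefix j
  refine ⟨hsuf, hpal, lps_eq_of_occCount_eq_one hsuf hpal, ?_, ?_⟩
  · rw [flatten_replicate_append_eq_map_range hu hvu]
    exact occCount_lps_map_range hz hn (by nlinarith [List.length_pos_iff.mpr hv])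
  · rw [hpow, hpow, add_mul, one_mul]
    exact defect_map_range_add hz hn (by nlinarith) _
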